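/- Let B be a compact set disjoint from a nonempty compact set Γ in ℝ², let I = [0, diam(B ∪ Γ)], let K = {(x,θ,t) ∈ B × S¹ × ℝ⁺ : x + t·θ̂ ∈ Γ}, and γ(x,θ) = inf{t > 0 : x + t·θ̂ ∈ Γ} (∞ if no such t). Then the graph gr(γ) = {(x,θ,γ(x,θ)) : γ(x,θ) < ∞} is a Gδ subset of K. -/

import Mathlib

open MeasureTheory Metric Set Filter
open scoped RealInnerProductSpace ENNReal NNReal Topology

noncomputable section

abbrev E2 : Type := EuclideanSpace ℝ (Fin 2)

/-- The unit vector in direction `θ`. -/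
def dir (θ : ℝ) : E2 := WithLp.toLp 2 ![Real.cos θ, Real.sin θ]

/-- The first hitting "time" of the set `Γ` along the ray from `x` in direction `θ`
(`∞` if the ray misses `Γ`; the infimum of the empty set in `ℝ≥0∞` is `∞`). -/
def gammaFn (Γ : Set E2) (x : E2) (θ : ℝ) : ℝ≥0∞ :=
  sInf {t : ℝ≥0∞ | ∃ s : ℝ, 0 < s ∧ t = ENNReal.ofReal s ∧ x + s • dir θ ∈ Γ}

lemma norm_dir (θ : ℝ) : ‖dir θ‖ = 1 := by
  rw [EuclideanSpace.norm_eq, Fin.sum_univ_two]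
  have h0 : dir θ 0 = Real.cos θ := rfl
  have h1 : dir θ 1 = Real.sin θ := rfl
  rw [h0, h1]
  simp only [Real.norm_eq_abs, sq_abs]
  rw [Real.cos_sq_add_sin_sq, Real.sqrt_one]

lemma continuous_dir : Continuous dir := by
  have h : Continuous fun θ : ℝ => (![Real.cos θ, Real.sin θ] : Fin 2 → ℝ) := by
    refine continuous_pi fun i => ?_
    fin_cases i <;> simp [Real.continuous_cos, Real.continuous_sin]
  exact (PiLp.continuous_toLp 2 _).comp h

lemma dist_ray (x : E2) (θ s : ℝ) (hs : 0 ≤ s) : dist x (x + s • dir θ) = s := by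
  rw [dist_self_add_right, norm_smul, norm_dir, mul_one, Real.norm_eq_abs, abs_of_nonneg hs]


/-- Lemma 3.1 (second part): the graph of `γ` is a `Gδ` subset of the compact lifting
`K = {(x,θ,t) ∈ B × S¹ × ℝ⁺ : x + t·θ̂ ∈ Γ}`; being `Gδ` relative to `K` is expressed
as being the intersection of `K` with an ambient `Gδ` set. -/
theorem stmt7 (B Γ : Set E2) (hB : IsCompact B) (hΓ : IsCompact Γ)
    (hΓne : Γ.Nonempty) (hdisj : Disjoint B Γ) :
    ∃ T : Set (E2 × ℝ × ℝ), IsGδ T ∧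
      {p : E2 × ℝ × ℝ | p.1 ∈ B ∧ gammaFn Γ p.1 p.2.1 ≠ ⊤ ∧
          p.2.2 = (gammaFn Γ p.1 p.2.1).toReal}
        = T ∩ {p : E2 × ℝ × ℝ | p.1 ∈ B ∧ 0 < p.2.2 ∧ p.1 + p.2.2 • dir p.2.1 ∈ Γ} := by
  classical
  set M : ℝ := Metric.diam (B ∪ Γ) with hMdef
  have hM0 : 0 ≤ M := Metric.diam_nonneg
  -- the "bad" sets
  set C : ℕ → Set (E2 × ℝ × ℝ) := fun n =>
    {p : E2 × ℝ × ℝ | p.1 ∈ B ∧ p.2.2 ≤ M ∧ 2 / (n + 1 : ℝ) ≤ p.2.2 ∧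
      ∃ s : ℝ, 1 / (n + 1 : ℝ) ≤ s ∧ s ≤ p.2.2 - 1 / (n + 1 : ℝ) ∧
        p.1 + s • dir p.2.1 ∈ Γ} with hCdef
  have hCclosed : ∀ n, IsClosed (C n) := by
    intro n
    set a : ℝ := 1 / (n + 1 : ℝ) with hadef
    have hcomp : CompactSpace (Icc a M) := isCompact_iff_compactSpace.mp isCompact_Icc
    set D : Set ((E2 × ℝ × ℝ) × Icc a M) :=
      {q | q.1.1 ∈ B ∧ q.1.2.2 ≤ M ∧ 2 / (n + 1 : ℝ) ≤ q.1.2.2 ∧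
        (q.2 : ℝ) ≤ q.1.2.2 - a ∧ q.1.1 + (q.2 : ℝ) • dir q.1.2.1 ∈ Γ} with hDdef
    have hDclosed : IsClosed D := by
      have c1 : Continuous fun q : (E2 × ℝ × ℝ) × Icc a M => q.1.1 := continuous_fst.fst
      have c2 : Continuous fun q : (E2 × ℝ × ℝ) × Icc a M => q.1.2.2 :=
        continuous_fst.snd.snd
      have c3 : Continuous fun q : (E2 × ℝ × ℝ) × Icc a M => (q.2 : ℝ) :=
        continuous_subtype_val.comp continuous_snd
      have c4 : Continuous fun q : (E2 × ℝ × ℝ) × Icc a M =>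
          q.1.1 + (q.2 : ℝ) • dir q.1.2.1 :=
        c1.add (c3.smul (continuous_dir.comp continuous_fst.snd.fst))
      simp only [hDdef, setOf_and]
      exact (hB.isClosed.preimage c1).inter ((isClosed_le c2 continuous_const).inter
        ((isClosed_le continuous_const c2).inter ((isClosed_le c3
          (c2.sub continuous_const)).inter (hΓ.isClosed.preimage c4))))
    have himg : C n = Prod.fst '' D := by
      ext p
      constructor
      · rintro ⟨hxB, hM, h2a, s, hs1, hs2, hhit⟩
        have hsmem : s ∈ Icc a M := ⟨hs1, by linarith [hadef ▸ Nat.one_div_pos_of_nat (n := n)]⟩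
        exact ⟨(p, ⟨s, hsmem⟩), ⟨hxB, hM, h2a, hs2, hhit⟩, rfl⟩
      · rintro ⟨⟨q, s⟩, ⟨hxB, hM, h2a, hs2, hhit⟩, rfl⟩
        exact ⟨hxB, hM, h2a, s, s.2.1, hs2, hhit⟩
    rw [himg]
    exact isClosedMap_fst_of_compactSpace D hDclosed
  refine ⟨⋂ n, (C n)ᶜ, IsGδ.iInter (fun n => ((hCclosed n).isOpen_compl).isGδ), ?_⟩
  ext ⟨x, θ, t⟩
  simp only [mem_setOf_eq, mem_inter_iff, mem_iInter, mem_compl_iff]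
  have hS : ∀ s : ℝ, 0 < s → x + s • dir θ ∈ Γ →
      ENNReal.ofReal s ∈ {u : ℝ≥0∞ | ∃ s' : ℝ, 0 < s' ∧ u = ENNReal.ofReal s' ∧
        x + s' • dir θ ∈ Γ} := fun s hs hhit => ⟨s, hs, rfl, hhit⟩
  constructor
  · rintro ⟨hxB, hγne, hteq⟩
    have hxΓ : x ∉ Γ := fun h => (disjoint_left.mp hdisj hxB) h
    have hd : 0 < infDist x Γ := (hΓ.isClosed.notMem_iff_infDist_pos hΓne).mp hxΓ
    have hlow : ENNReal.ofReal (infDist x Γ) ≤ gammaFn Γ x θ := by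
      refine le_sInf ?_
      rintro u ⟨s, hs, rfl, hhit⟩
      refine ENNReal.ofReal_le_ofReal ?_
      calc infDist x Γ ≤ dist x (x + s • dir θ) := infDist_le_dist_of_mem hhit
        _ = s := dist_ray x θ s hs.le
    have htpos : 0 < t := by
      rw [hteq]
      have : infDist x Γ ≤ (gammaFn Γ x θ).toReal :=
        (ENNReal.ofReal_le_iff_le_toReal hγne).mp hlow
      linarith
    -- hitting at time t : approximating sequence
    have hseq : ∀ n : ℕ, ∃ s : ℝ, 0 < s ∧ x + s • dir θ ∈ Γ ∧
        t ≤ s ∧ s ≤ t + 1 / (n + 1 : ℝ) := by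
      intro n
      have hlt : gammaFn Γ x θ < gammaFn Γ x θ + ENNReal.ofReal (1 / (n + 1 : ℝ)) := by
        refine ENNReal.lt_add_right hγne ?_
        simp [ENNReal.ofReal_eq_zero, not_le]
        positivity
      obtain ⟨u, hu, hult⟩ := sInf_lt_iff.mp hlt
      obtain ⟨s, hs, rfl, hhit⟩ := hu
      have hle : gammaFn Γ x θ ≤ ENNReal.ofReal s := sInf_le (hS s hs hhit)
      refine ⟨s, hs, hhit, ?_, ?_⟩
      · rw [hteq]
        exact (ENNReal.toReal_le_of_le_ofReal hs.le hle)
      · have := ENNReal.toReal_le_toReal (ne_top_of_lt hult)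
          (by finiteness : gammaFn Γ x θ + ENNReal.ofReal (1 / (n + 1 : ℝ)) ≠ ⊤) |>.mpr hult.le
        rw [ENNReal.toReal_ofReal hs.le, ENNReal.toReal_add hγne (by finiteness),
          ENNReal.toReal_ofReal (by positivity)] at this
        linarith [hteq ▸ this]
    choose sn hsn0 hsnΓ hsnl hsnu using hseq
    have hsn_tend : Tendsto sn atTop (𝓝 t) := by
      refine tendsto_of_tendsto_of_tendsto_of_le_of_le tendsto_const_nhds
        (g := fun _ => t) (h := fun n : ℕ => t + 1 / (n + 1 : ℝ)) ?_ hsnl hsnu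
      have := tendsto_one_div_add_atTop_nhds_zero_nat (𝕜 := ℝ)
      simpa using tendsto_const_nhds.add this
    have hhit_t : x + t • dir θ ∈ Γ := by
      have htend : Tendsto (fun n : ℕ => x + sn n • dir θ) atTop (𝓝 (x + t • dir θ)) :=
        Tendsto.const_add x (hsn_tend.smul_const (dir θ))
      exact hΓ.isClosed.mem_of_tendsto htend (Eventually.of_forall hsnΓ)
    refine ⟨fun n => ?_, hxB, htpos, hhit_t⟩
    rintro ⟨-, -, -, s, hs1, hs2, hhit⟩
    have ha : 0 < 1 / (n + 1 : ℝ) := by positivity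
    have hs0 : 0 < s := lt_of_lt_of_le ha hs1
    have : gammaFn Γ x θ ≤ ENNReal.ofReal s := sInf_le (hS s hs0 hhit)
    have hts : t ≤ s := hteq ▸ ENNReal.toReal_le_of_le_ofReal hs0.le this
    linarith
  · rintro ⟨hT, hxB, htpos, hhit⟩
    have htM : t ≤ M := by
      have := dist_le_diam_of_mem ((hB.union hΓ).isBounded)
        (mem_union_left _ hxB) (mem_union_right _ hhit)
      rwa [dist_ray x θ t htpos.le] at this
    have hγle : gammaFn Γ x θ ≤ ENNReal.ofReal t := sInf_le (hS t htpos hhit)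
    have hγge : ENNReal.ofReal t ≤ gammaFn Γ x θ := by
      refine le_sInf ?_
      rintro u ⟨s, hs, rfl, hhit'⟩
      refine ENNReal.ofReal_le_ofReal ?_
      by_contra hlt
      push_neg at hlt
      obtain ⟨n, hn⟩ := exists_nat_one_div_lt (show (0:ℝ) < min s (t - s) by
        simp [lt_min_iff]; exact ⟨hs, by linarith⟩)
      have ha1 : 1 / (n + 1 : ℝ) ≤ s := le_of_lt (lt_of_lt_of_le hn (min_le_left _ _))
      have ha2 : 1 / (n + 1 : ℝ) ≤ t - s := le_of_lt (lt_of_lt_of_le hn (min_le_right _ _))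
      have h2 : 2 / (n + 1 : ℝ) = 1 / (n + 1 : ℝ) + 1 / (n + 1 : ℝ) := by ring
      exact hT n ⟨hxB, htM, by linarith, s, ha1, by linarith, hhit'⟩
    have hγeq : gammaFn Γ x θ = ENNReal.ofReal t := le_antisymm hγle hγge
    refine ⟨hxB, by rw [hγeq]; finiteness, ?_⟩
    rw [hγeq, ENNReal.toReal_ofReal htpos.le]
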